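/- Let G be a finite C-I cograph. Then there exists a poset P which is the disjoint sum P = P_1 + P_2 + ⋯ + P_r of finitely many posets, where each P_i admits a rank function ρ_i : P_i → {0, 1, 2} such that for all x, y ∈ P_i, x < y if and only if ρ_i(x) < ρ_i(y) (i.e., each P_i is a completely ranked poset of rank at most 2), and G is isomorphic to the C-I graph G_P of P. -/

import Mathlib

open SimpleGraph

/-- The cover-incomparability graph of a poset `V`: distinct `u, v` are adjacent iff
`u` covers `v`, `v` covers `u`, or `u` and `v` are incomparable. -/
def ciGraph (V : Type*) [PartialOrder V] : SimpleGraph V where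
  Adj u v := u ⋖ v ∨ v ⋖ u ∨ (¬ u ≤ v ∧ ¬ v ≤ u)
  symm := by
    constructor
    intro u v h
    rcases h with h | h | h
    · exact Or.inr (Or.inl h)
    · exact Or.inl h
    · exact Or.inr (Or.inr ⟨h.2, h.1⟩)
  loopless := by
    constructor
    intro u h
    rcases h with h | h | h
    · exact h.ne rfl
    · exact h.ne rfl
    · exact h.1 le_rfl

/-- A graph is a C-I graph if it is isomorphic to the cover-incomparability graph
of some finite poset. -/
def IsCIGraph {W : Type u} (G : SimpleGraph W) : Prop :=
  ∃ (V : Type u) (inst : PartialOrder V) (_ : Finite V),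
    Nonempty (G ≃g @ciGraph V inst)

/-- A vertex is simplicial if its neighborhood is a clique. -/
def IsSimplicialVertex {V : Type*} (G : SimpleGraph V) (v : V) : Prop :=
  G.IsClique (G.neighborSet v)

/-- A graph is chordal if it has no induced cycle of length greater than 3. -/
def IsChordal {V : Type*} (G : SimpleGraph V) : Prop :=
  ∀ n : ℕ, 3 < n → IsEmpty (cycleGraph n ↪g G)

/-- A cograph: no induced path on four vertices. -/
def IsCograph {V : Type*} (G : SimpleGraph V) : Prop :=
  ¬ ∃ a b c d : V, a ≠ b ∧ a ≠ c ∧ a ≠ d ∧ b ≠ c ∧ b ≠ d ∧ c ≠ d ∧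
    G.Adj a b ∧ G.Adj b c ∧ G.Adj c d ∧ ¬ G.Adj a c ∧ ¬ G.Adj a d ∧ ¬ G.Adj b d

/-- `G` has exactly two independent simplicial vertices. -/
def HasExactlyTwoIndepSimplicial {V : Type*} (G : SimpleGraph V) : Prop :=
  (∃ a b : V, a ≠ b ∧ ¬ G.Adj a b ∧ IsSimplicialVertex G a ∧ IsSimplicialVertex G b) ∧
  ¬ ∃ a b c : V, a ≠ b ∧ a ≠ c ∧ b ≠ c ∧ ¬ G.Adj a b ∧ ¬ G.Adj a c ∧ ¬ G.Adj b c ∧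
    IsSimplicialVertex G a ∧ IsSimplicialVertex G b ∧ IsSimplicialVertex G c

/-- A complete graph: all distinct vertices adjacent. -/
def IsCompleteGraph {V : Type*} (G : SimpleGraph V) : Prop :=
  ∀ u v : V, u ≠ v → G.Adj u v

/-- A maximal clique of `G`. -/
def IsMaxClique {V : Type*} (G : SimpleGraph V) (s : Set V) : Prop :=
  G.IsClique s ∧ ∀ t : Set V, G.IsClique t → s ⊆ t → t = s

/-!
In a poset `P`, the non-edges of the C-I graph are the pairs `a < b` with an element strictly
between them. If `G_P` is a cograph, a covering chain through four elements would be an induced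
`P₄`, so lower ends of such pairs are minimal and upper ends maximal; a second induced `P₄`
shows that these pairs form a disjoint union of complete bipartite graphs `Lᵢ × Hᵢ`, and every
element lying strictly inside a pair belongs to exactly one block `Mᵢ`. Re-ordering each block as
`Lᵢ < Mᵢ < Hᵢ` and making everything else incomparable leaves these pairs, hence `G_P`, unchanged.
-/

variable {α β : Type*}

def Distant [Preorder α] (a b : α) : Prop := ∃ m, a < m ∧ m < b

section PartialOrder

variable [PartialOrder α] [PartialOrder β] {a b : α}

theorem Distant.lt (h : Distant a b) : a < b :=
  let ⟨_, ham, hmb⟩ := h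
  ham.trans hmb

theorem distant_iff_lt_not_covBy : Distant a b ↔ a < b ∧ ¬ a ⋖ b :=
  ⟨fun h => ⟨h.lt, (not_covBy_iff h.lt).2 h⟩, fun h => (not_covBy_iff h.1).1 h.2⟩

theorem ciGraph_adj_iff : (ciGraph α).Adj a b ↔ a ≠ b ∧ ¬ Distant a b ∧ ¬ Distant b a := by
  simp only [ciGraph, distant_iff_lt_not_covBy]
  grind [CovBy.lt, lt_iff_le_and_ne]

def ciGraphIsoOfDistantIff (e : α ≃ β) (he : ∀ a b, Distant (e a) (e b) ↔ Distant a b) :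
    ciGraph α ≃g ciGraph β where
  toEquiv := e
  map_rel_iff' := by simp [ciGraph_adj_iff, he]

end PartialOrder

theorem IsCograph.map_iso {G : SimpleGraph α} {H : SimpleGraph β} (hG : IsCograph G)
    (e : G ≃g H) : IsCograph H := by
  rintro ⟨a, b, c, d, h⟩
  refine hG ⟨e.symm a, e.symm b, e.symm c, e.symm d, ?_⟩
  simpa [← e.symm.map_adj_iff] using h

section Cograph

variable [PartialOrder α] [IsStronglyAtomic α] {a b c d : α}

theorem IsCograph.not_lt_of_lt_of_lt (hα : IsCograph (ciGraph α))
    (hab : a < b) (hbc : b < c) : ¬ c < d := by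
  intro hcd
  obtain ⟨q, haq, hqb⟩ := exists_covBy_le_of_lt hab
  obtain ⟨r, hqr, hrc⟩ := exists_covBy_le_of_lt (hqb.trans_lt hbc)
  obtain ⟨s, hrs, -⟩ := exists_covBy_le_of_lt (hrc.trans_lt hcd)
  have hdist (x y z : α) (hxy : x < y) (hyz : y < z) : ¬ (ciGraph α).Adj x z :=
    fun h => (ciGraph_adj_iff.1 h).2.1 ⟨y, hxy, hyz⟩
  exact hα ⟨a, q, r, s, haq.lt.ne, (haq.lt.trans hqr.lt).ne,
    (haq.lt.trans (hqr.lt.trans hrs.lt)).ne, hqr.lt.ne, (hqr.lt.trans hrs.lt).ne, hrs.lt.ne,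
    Or.inl haq, Or.inl hqr, Or.inl hrs, hdist _ _ _ haq.lt hqr.lt,
    hdist _ _ _ haq.lt (hqr.lt.trans hrs.lt), hdist _ _ _ hqr.lt hrs.lt⟩

theorem IsCograph.isMin_of_distant (hα : IsCograph (ciGraph α)) (h : Distant a b) : IsMin a :=
  let ⟨_, ham, hmb⟩ := h
  isMin_iff_forall_not_lt.2 fun _ hca => hα.not_lt_of_lt_of_lt hca ham hmb

theorem IsCograph.isMax_of_distant (hα : IsCograph (ciGraph α)) (h : Distant a b) : IsMax b :=
  let ⟨_, ham, hmb⟩ := h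
  isMax_iff_forall_not_lt.2 fun _ hbc => hα.not_lt_of_lt_of_lt ham hmb hbc

theorem IsCograph.distant_zigzag (hα : IsCograph (ciGraph α)) {x y x' y' : α}
    (h₁ : Distant x y) (h₂ : Distant x' y) (h₃ : Distant x' y') : Distant x y' := by
  by_contra hxy'
  obtain rfl | hxx' := eq_or_ne x x'
  · exact hxy' h₃
  obtain rfl | hyy' := eq_or_ne y y'
  · exact hxy' h₁
  have hx := hα.isMin_of_distant h₁
  have hx' := hα.isMin_of_distant h₃
  have hy := hα.isMax_of_distant h₁
  have hy' := hα.isMax_of_distant h₃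
  have hy'x : y' ≠ x := fun h => hx.not_lt (h ▸ h₃.lt)
  -- Otherwise `y, y', x, x'` is an induced `P₄`.
  refine hα ⟨y, y', x, x', hyy', h₁.lt.ne', h₂.lt.ne', hy'x, h₃.lt.ne', hxx', ?_, ?_, ?_,
    fun h => (ciGraph_adj_iff.1 h).2.2 h₁, fun h => (ciGraph_adj_iff.1 h).2.2 h₂,
    fun h => (ciGraph_adj_iff.1 h).2.2 h₃⟩ <;> refine ciGraph_adj_iff.2 ⟨by assumption, ?_, ?_⟩
  · exact fun h => hy.not_lt h.lt
  · exact fun h => hy'.not_lt h.lt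
  · exact fun h => hy'.not_lt h.lt
  · exact hxy'
  · exact fun h => hx'.not_lt h.lt
  · exact fun h => hx.not_lt h.lt

theorem IsCograph.distant_of_mem_Icc (hα : IsCograph (ciGraph α)) {l h l' h' a : α}
    (hlh : Distant l h) (hlh' : Distant l' h') (ha : a ∈ Set.Icc l h)
    (ha' : a ∈ Set.Icc l' h') : Distant l h' := by
  obtain rfl | hla := ha.1.eq_or_lt
  · exact (hα.isMin_of_distant hlh).eq_of_ge ha'.1 ▸ hlh'
  obtain rfl | hah' := ha'.2.eq_or_lt
  · exact (hα.isMax_of_distant hlh').eq_of_le ha.2 ▸ hlh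
  exact ⟨a, hla, hah'⟩

end Cograph

section Blocks

variable [PartialOrder α]

/-- The upper ends `Hᵢ` of the block containing `a`, or `∅` if `a` lies in no block; this labels
the summands of the rebuilt poset. -/
def componentTops (a : α) : Set α :=
  {t | ∃ l h, a ∈ Set.Icc l h ∧ Distant l h ∧ Distant l t}

open Classical in
/-- The rank in the rebuilt poset: `2` on the `Hᵢ`, `1` on the `Mᵢ`, `0` on the `Lᵢ` and on
elements in no block. -/
noncomputable def level (a : α) : Fin 3 :=
  if ∃ l, Distant l a then 2 else if IsMin a ∨ IsMax a then 0 else 1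

variable {a b : α}

theorem level_eq_two_iff : level a = 2 ↔ ∃ l, Distant l a := by
  unfold level; split_ifs <;> simp_all

theorem level_eq_zero_iff : level a = 0 ↔ (¬ ∃ l, Distant l a) ∧ (IsMin a ∨ IsMax a) := by
  unfold level; split_ifs <;> simp_all

theorem level_eq_one_iff : level a = 1 ↔ (¬ ∃ l, Distant l a) ∧ ¬ (IsMin a ∨ IsMax a) := by
  unfold level; split_ifs <;> simp_all

variable [IsStronglyAtomic α]

theorem IsCograph.componentTops_eq (hα : IsCograph (ciGraph α)) {l h : α} (hlh : Distant l h)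
    (ha : a ∈ Set.Icc l h) : componentTops a = {t | Distant l t} := by
  ext t
  refine ⟨fun ⟨l', h', ha', hlh', hl't⟩ => ?_, fun hlt => ⟨l, h, ha, hlh, hlt⟩⟩
  exact hα.distant_zigzag (hα.distant_of_mem_Icc hlh hlh' ha ha') hlh' hl't

end Blocks

/-- `α` reordered as the disjoint sum of the fibres of `key`, each ordered by `rank` alone. -/
def RankedSum {κ ι : Type*} (_key : α → κ) (_rank : α → ι) : Type _ := α

namespace RankedSum

variable {κ ι : Type*} [Preorder ι] {key : α → κ} {rank : α → ι}

def toRankedSum : α ≃ RankedSum key rank := Equiv.refl α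

instance : PartialOrder (RankedSum key rank) where
  le a b := a = b ∨ key a = key b ∧ rank a < rank b
  lt a b := key a = key b ∧ rank a < rank b
  le_refl _ := Or.inl rfl
  le_trans a b c := by
    rintro (rfl | ⟨hk₁, hr₁⟩) (rfl | ⟨hk₂, hr₂⟩)
    exacts [Or.inl rfl, Or.inr ⟨hk₂, hr₂⟩, Or.inr ⟨hk₁, hr₁⟩,
      Or.inr ⟨hk₁.trans hk₂, hr₁.trans hr₂⟩]
  le_antisymm a b := by
    rintro (rfl | ⟨-, hr₁⟩) (h | ⟨-, hr₂⟩)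
    exacts [rfl, rfl, h.symm, (hr₁.asymm hr₂).elim]
  lt_iff_le_not_ge a b := by
    refine ⟨fun h => ⟨Or.inr h, ?_⟩,
      fun ⟨h, hn⟩ => h.resolve_left fun hab => hn (Or.inl hab.symm)⟩
    rintro (rfl | ⟨-, hr⟩)
    exacts [h.2.false, h.2.asymm hr]

theorem distant_toRankedSum_iff {a b : α} :
    Distant (toRankedSum a : RankedSum key rank) (toRankedSum b) ↔
      ∃ m, key a = key m ∧ key m = key b ∧ rank a < rank m ∧ rank m < rank b :=
  ⟨fun ⟨m, ⟨hk₁, hr₁⟩, hk₂, hr₂⟩ => ⟨m, hk₁, hk₂, hr₁, hr₂⟩,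
    fun ⟨m, hk₁, hk₂, hr₁, hr₂⟩ => ⟨toRankedSum m, ⟨hk₁, hr₁⟩, hk₂, hr₂⟩⟩

theorem exists_fin_index [Finite α] :
    ∃ (r : ℕ) (idx : RankedSum key rank → Fin r), (∀ x y, x ≤ y → idx x = idx y) ∧
      ∀ x y, idx x = idx y →
        (x < y ↔ rank (toRankedSum.symm x) < rank (toRankedSum.symm y)) := by
  obtain ⟨r, ⟨e⟩⟩ := Finite.exists_equiv_fin (Set.range key)
  let idx (x : α) : Fin r := e (Set.rangeFactorization key x)
  have hidx {x y : α} : idx x = idx y ↔ key x = key y := e.apply_eq_iff_eq.trans Subtype.ext_iff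
  refine ⟨r, idx, ?_, fun x y h => and_iff_right (hidx.1 h)⟩
  rintro x y (rfl | ⟨hk, -⟩)
  exacts [rfl, hidx.2 hk]

end RankedSum

open RankedSum in
theorem IsCograph.distant_toRankedSum_iff [PartialOrder α] [IsStronglyAtomic α]
    (hα : IsCograph (ciGraph α)) {a b : α} :
    Distant (toRankedSum a : RankedSum componentTops level) (toRankedSum b) ↔ Distant a b := by
  rw [RankedSum.distant_toRankedSum_iff]
  constructor
  · rintro ⟨m, ham, hmb, hlam, hlmb⟩
    obtain ⟨l, hlb⟩ := level_eq_two_iff.1 (show level b = 2 by omega)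
    have hb : b ∈ componentTops a := (ham.trans hmb) ▸ ⟨l, b, ⟨hlb.lt.le, le_rfl⟩, hlb, hlb⟩
    obtain ⟨l', h', ⟨hl'a, hah'⟩, hl'h', hl'b⟩ := hb
    obtain ⟨hna, hmin | hmax⟩ := level_eq_zero_iff.1 (show level a = 0 by omega)
    · exact hmin.eq_of_ge hl'a ▸ hl'b
    · exact (hna ⟨l', hmax.eq_of_le hah' ▸ hl'h'⟩).elim
  · intro hab
    obtain ⟨m, ham, hmb⟩ := id hab
    have hmin := hα.isMin_of_distant hab
    have hkey {x : α} (hx : x ∈ Set.Icc a b) : componentTops x = {t | Distant a t} :=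
      hα.componentTops_eq hab hx
    have hla : level a = 0 :=
      level_eq_zero_iff.2 ⟨fun ⟨_, hl⟩ => hmin.not_lt hl.lt, Or.inl hmin⟩
    have hlm : level m = 1 := level_eq_one_iff.2
      ⟨fun ⟨_, hl⟩ => (hα.isMax_of_distant hl).not_lt hmb,
        not_or.2 ⟨not_isMin_of_lt ham, not_isMax_of_lt hmb⟩⟩
    have hlb : level b = 2 := level_eq_two_iff.2 ⟨a, hab⟩
    refine ⟨m, ?_, ?_, by rw [hla, hlm]; decide, by rw [hlm, hlb]; decide⟩
    · rw [hkey ⟨le_rfl, hab.lt.le⟩, hkey ⟨ham.le, hmb.le⟩]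
    · rw [hkey ⟨ham.le, hmb.le⟩, hkey ⟨hab.lt.le, le_rfl⟩]

theorem CI_cograph_ranked_poset_general {V : Type u} (G : SimpleGraph V)
    (hcog : IsCograph G) (hCI : IsCIGraph G) :
    ∃ (W : Type u) (inst : PartialOrder W) (_ : Finite W) (r : ℕ)
      (idx : W → Fin r) (ρ : W → Fin 3),
      (∀ x y : W, x ≤ y → idx x = idx y) ∧
      (∀ x y : W, idx x = idx y → (x < y ↔ ρ x < ρ y)) ∧
      Nonempty (G ≃g @ciGraph W inst) := by
  obtain ⟨P, _, _, ⟨e⟩⟩ := hCI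
  have hP : IsCograph (ciGraph P) := hcog.map_iso e
  obtain ⟨r, idx, hidx_le, hidx_lt⟩ :=
    RankedSum.exists_fin_index (key := componentTops (α := P)) (rank := level)
  have hiso : ciGraph P ≃g ciGraph (RankedSum componentTops level) :=
    ciGraphIsoOfDistantIff RankedSum.toRankedSum fun _ _ => hP.distant_toRankedSum_iff
  exact ⟨_, inferInstance, Finite.of_equiv P RankedSum.toRankedSum, r, idx,
    fun x => level (RankedSum.toRankedSum.symm x), hidx_le, hidx_lt, ⟨e.trans hiso⟩⟩

/-- Every finite C-I cograph is the C-I graph of a poset which is a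
disjoint sum `P = P₁ + ⋯ + P_r` of completely ranked posets of rank at most 2: there are
an index function `idx` (whose fibers are the summands, so that comparable elements lie
in a common fiber) and a rank function `ρ` with values in `{0, 1, 2}` such that within
each fiber `x < y ↔ ρ x < ρ y`. -/
theorem CI_cograph_ranked_poset {V : Type u} [Finite V] (G : SimpleGraph V)
    (hcog : IsCograph G) (hCI : IsCIGraph G) :
    ∃ (W : Type u) (inst : PartialOrder W) (_ : Finite W) (r : ℕ)
      (idx : W → Fin r) (ρ : W → Fin 3),
      (∀ x y : W, x ≤ y → idx x = idx y) ∧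
      (∀ x y : W, idx x = idx y → (x < y ↔ ρ x < ρ y)) ∧
      Nonempty (G ≃g @ciGraph W inst) :=
  CI_cograph_ranked_poset_general G hcog hCI
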